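/- arXiv:2210.12981 — 2 statements merged into one kernel-verified Lean document; each statement's English description precedes it below -/
import Mathlib

section
/- Let G be a connected graph on n vertices with m edges. Then IRB(G) ≤ 2mn − (∑_{v∈V} √deg(v))², where IRB(G) = ∑_{(u,v)∈E}(√deg(u) − √deg(v))². -/
/-!
Each edge `uv` contributes `(√d_u - √d_v)²` twice to the sum over ordered adjacent pairs, and
that sum is at most the sum over all ordered pairs of vertices. By Lagrange's identity the latter
equals `2 (n ∑ d_v - (∑ √d_v)²) = 2 (2mn - (∑ √d_v)²)`.
-/

/-- The IRB irregularity index of a graph. -/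
noncomputable def irb {V : Type*} [Fintype V] [DecidableEq V]
    (G : SimpleGraph V) [DecidableRel G.Adj] : ℝ :=
  ∑ e ∈ G.edgeFinset,
    Sym2.lift ⟨fun u v => (Real.sqrt (G.degree u) - Real.sqrt (G.degree v)) ^ 2,
      fun u v => by ring⟩ e

open Finset

theorem Finset.sum_sum_sub_sq {ι R : Type*} [CommRing R] (s : Finset ι) (a : ι → R) :
    ∑ i ∈ s, ∑ j ∈ s, (a i - a j) ^ 2 = 2 * (#s * ∑ i ∈ s, a i ^ 2 - (∑ i ∈ s, a i) ^ 2) := by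
  have h_expand (i j : ι) : (a i - a j) ^ 2 = a i ^ 2 + a j ^ 2 - 2 * (a i * a j) := by ring
  simp only [h_expand, sum_add_distrib, sum_sub_distrib, sum_const, nsmul_eq_mul, ← mul_sum,
    ← sum_mul]
  ring

namespace SimpleGraph

variable {V : Type*} [Fintype V] (G : SimpleGraph V) [DecidableRel G.Adj]

theorem sum_darts_edge_eq_two_nsmul {M : Type*} [AddCommMonoid M] (g : Sym2 V → M) :
    ∑ d : G.Dart, g d.edge = 2 • ∑ e ∈ G.edgeFinset, g e := by
  classical
  rw [← sum_fiberwise_of_maps_to' (t := G.edgeFinset) (fun d _ => G.mem_edgeFinset.2 d.edge_mem),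
    smul_sum]
  refine sum_congr rfl fun e he => ?_
  rw [sum_const, G.dart_edge_fiber_card e (G.mem_edgeFinset.1 he)]

theorem sum_darts_le_sum_sum {R : Type*} [AddCommMonoid R] [PartialOrder R]
    [IsOrderedAddMonoid R] (f : V → V → R) (hf : ∀ u v, 0 ≤ f u v) :
    ∑ d : G.Dart, f d.fst d.snd ≤ ∑ u, ∑ v, f u v := by
  calc ∑ d : G.Dart, f d.fst d.snd
      = ∑ p ∈ univ.map ⟨Dart.toProd, Dart.ext⟩, f p.1 p.2 := by rw [sum_map]; rfl
    _ ≤ ∑ p : V × V, f p.1 p.2 := sum_le_univ_sum_of_nonneg fun p => hf p.1 p.2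
    _ = ∑ u, ∑ v, f u v := Fintype.sum_prod_type' f

end SimpleGraph

theorem stmt8_general {V : Type*} [Fintype V] [DecidableEq V] (G : SimpleGraph V)
    [DecidableRel G.Adj] :
    irb G ≤ 2 * G.edgeFinset.card * (Fintype.card V : ℝ) -
      (∑ v : V, Real.sqrt (G.degree v)) ^ 2 := by
  set s : V → ℝ := fun v => Real.sqrt (G.degree v)
  have h_darts : ∑ d : G.Dart, (s d.fst - s d.snd) ^ 2 = 2 * irb G := by
    rw [irb, two_mul, ← two_nsmul, ← G.sum_darts_edge_eq_two_nsmul]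
    rfl
  have h_pairs : ∑ u, ∑ v, (s u - s v) ^ 2 =
      2 * (Fintype.card V * (2 * G.edgeFinset.card) - (∑ v, s v) ^ 2) := by
    have h_sq (v : V) : s v ^ 2 = G.degree v := Real.sq_sqrt (Nat.cast_nonneg _)
    have h_deg : ∑ v, (G.degree v : ℝ) = 2 * G.edgeFinset.card := by
      exact_mod_cast G.sum_degrees_eq_twice_card_edges
    rw [sum_sum_sub_sq, card_univ]
    simp only [h_sq, h_deg]
  have h_le := G.sum_darts_le_sum_sum (fun u v => (s u - s v) ^ 2) fun _ _ => sq_nonneg _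
  linarith

theorem stmt8 {V : Type*} [Fintype V] [DecidableEq V] (G : SimpleGraph V)
    [DecidableRel G.Adj] (hG : G.Connected) :
    irb G ≤ 2 * G.edgeFinset.card * (Fintype.card V : ℝ) -
      (∑ v : V, Real.sqrt (G.degree v)) ^ 2 :=
  stmt8_general G
end

section
/- Let G be a connected graph on n vertices with m edges. For each edge (u,v) let n_{uv} = |{w : d(w,u) = d(w,v)}|. Then Mo(G)² ≤ m²(n−2)² − m(n−2)·∑_{(u,v)∈E} n_{uv}, where Mo(G) = ∑_{e=(u,v)∈E}|n_e(u) − n_e(v)|. -/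
/-!
Every vertex is closer to `u`, closer to `v`, or equidistant, and for an edge `uv` both
endpoints lie on their own side, so `|n_e(u) - n_e(v)| + n_{uv} ≤ n - 2`. Summing over the
edges gives `Mo(G) + Σ n_{uv} ≤ m (n - 2)`, and the quadratic bound follows from
`x + y ≤ t`, `x, y ≥ 0` ⟹ `x² ≤ t² - t y`.
-/

noncomputable def closerCount {V : Type*} (G : SimpleGraph V) (u v : V) : ℕ :=
  ({w | G.dist w u < G.dist w v} : Set V).ncard

noncomputable def equidistCount {V : Type*} (G : SimpleGraph V) (u v : V) : ℕ :=
  ({w | G.dist w u = G.dist w v} : Set V).ncard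

lemma equidistCount_comm {V : Type*} (G : SimpleGraph V) (u v : V) :
    equidistCount G u v = equidistCount G v u := by
  unfold equidistCount
  congr 1
  ext w
  exact eq_comm

noncomputable def mostar {V : Type*} [Fintype V] [DecidableEq V]
    (G : SimpleGraph V) [DecidableRel G.Adj] : ℝ :=
  ∑ e ∈ G.edgeFinset,
    Sym2.lift ⟨fun u v => |(closerCount G u v : ℝ) - (closerCount G v u : ℝ)|,
      fun u v => abs_sub_comm _ _⟩ e

lemma sq_le_sq_sub_mul_of_add_le {R : Type*} [CommRing R] [LinearOrder R] [IsStrictOrderedRing R]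
    {x y t : R} (hx : 0 ≤ x) (hy : 0 ≤ y) (h : x + y ≤ t) : x ^ 2 ≤ t ^ 2 - t * y :=
  calc x ^ 2 = x * x := sq x
    _ ≤ t * (t - y) := mul_le_mul (by linarith) (by linarith) hx (by linarith)
    _ = t ^ 2 - t * y := by ring

namespace SimpleGraph

variable {V : Type*} (G : SimpleGraph V)

lemma closerCount_add_closerCount_add_equidistCount [Fintype V] (u v : V) :
    closerCount G u v + closerCount G v u + equidistCount G u v = Fintype.card V := by
  set A : Set V := {w | G.dist w u < G.dist w v}
  set B : Set V := {w | G.dist w v < G.dist w u}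
  set C : Set V := {w | G.dist w u = G.dist w v}
  have hAB : Disjoint A B := Set.disjoint_left.2 fun w hA hB => by
    simp only [A, B, Set.mem_ofPred_eq] at hA hB
    omega
  have hABC : Disjoint (A ∪ B) C := Set.disjoint_left.2 fun w hAB hC => by
    simp only [A, B, C, Set.mem_union, Set.mem_ofPred_eq] at hAB hC
    omega
  have hcover : A ∪ B ∪ C = Set.univ := Set.eq_univ_of_forall fun w => by
    simp only [A, B, C, Set.mem_union, Set.mem_ofPred_eq]
    omega
  have := congrArg Set.ncard hcover
  rw [Set.ncard_union_eq hABC, Set.ncard_union_eq hAB, Set.ncard_univ,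
    Nat.card_eq_fintype_card] at this
  exact this

lemma one_le_closerCount [Finite V] {u v : V} (h : G.Adj u v) : 1 ≤ closerCount G u v :=
  (Set.ncard_pos).2 ⟨u, by simp [dist_eq_one_iff_adj.2 h]⟩

lemma abs_closerCount_sub_add_equidistCount_le [Fintype V] {u v : V} (h : G.Adj u v) :
    |(closerCount G u v : ℝ) - closerCount G v u| + equidistCount G u v ≤ Fintype.card V - 2 := by
  have hpart : (closerCount G u v + closerCount G v u + equidistCount G u v : ℝ) =
      Fintype.card V := by exact_mod_cast G.closerCount_add_closerCount_add_equidistCount u v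
  have hu : (1 : ℝ) ≤ closerCount G u v := by exact_mod_cast G.one_le_closerCount h
  have hv : (1 : ℝ) ≤ closerCount G v u := by exact_mod_cast G.one_le_closerCount h.symm
  rcases abs_cases ((closerCount G u v : ℝ) - closerCount G v u) with ⟨habs, -⟩ | ⟨habs, -⟩ <;>
    linarith

variable [Fintype V] [DecidableEq V] [DecidableRel G.Adj]

lemma mostar_nonneg : 0 ≤ mostar G :=
  Finset.sum_nonneg fun e _ => Sym2.ind (fun _ _ => abs_nonneg _) e

lemma mostar_add_sum_equidistCount_le :
    mostar G + ∑ e ∈ G.edgeFinset,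
        Sym2.lift ⟨fun u v => (equidistCount G u v : ℝ),
          fun u v => congrArg Nat.cast (equidistCount_comm G u v)⟩ e ≤
      G.edgeFinset.card * ((Fintype.card V : ℝ) - 2) := by
  rw [mostar, ← Finset.sum_add_distrib, ← nsmul_eq_mul, ← Finset.sum_const]
  refine Finset.sum_le_sum fun e he => ?_
  induction e using Sym2.ind with
  | h u v => exact G.abs_closerCount_sub_add_equidistCount_le (G.mem_edgeFinset.1 he)

end SimpleGraph

theorem stmt18_general {V : Type*} [Fintype V] [DecidableEq V] (G : SimpleGraph V)
    [DecidableRel G.Adj] :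
    mostar G ^ 2 ≤
      (G.edgeFinset.card : ℝ) ^ 2 * ((Fintype.card V : ℝ) - 2) ^ 2 -
        (G.edgeFinset.card : ℝ) * ((Fintype.card V : ℝ) - 2) *
          ∑ e ∈ G.edgeFinset,
            Sym2.lift ⟨fun u v => (equidistCount G u v : ℝ),
              fun u v => congrArg Nat.cast (equidistCount_comm G u v)⟩ e := by
  rw [← mul_pow]
  exact sq_le_sq_sub_mul_of_add_le G.mostar_nonneg
    (Finset.sum_nonneg fun e _ => Sym2.ind (fun _ _ => Nat.cast_nonneg _) e)
    G.mostar_add_sum_equidistCount_le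

theorem stmt18 {V : Type*} [Fintype V] [DecidableEq V] (G : SimpleGraph V)
    [DecidableRel G.Adj] (hG : G.Connected) (hn : 2 ≤ Fintype.card V) :
    mostar G ^ 2 ≤
      (G.edgeFinset.card : ℝ) ^ 2 * ((Fintype.card V : ℝ) - 2) ^ 2 -
        (G.edgeFinset.card : ℝ) * ((Fintype.card V : ℝ) - 2) *
          ∑ e ∈ G.edgeFinset,
            Sym2.lift ⟨fun u v => (equidistCount G u v : ℝ),
              fun u v => congrArg Nat.cast (equidistCount_comm G u v)⟩ e :=
  stmt18_general G
end
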